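/- Let (λ_n)_{n∈ℤ} be a sequence of negative reals with λ_{n-1} = λ_n(5 - λ_n) and λ_n → -∞ as n → -∞. With c_n = 1 - λ_n/4 and s_n = (-λ_n/4)·Π_{k=0}^∞ (1 + 4/(2 - λ_{n-k})), one has lim_{n→-∞} (c_n² - s_n²) = 1/2. -/

import Mathlib

/-! With `x = -λ_n`, the first two factors of the product are explicit:
`(x/4)(1 + 4/(2+x))(1 + 4/(2+x(5+x))) = c_n - δ` with `δ ~ 1/x`, so
`c_n² - (c_n - δ)² = 2c_nδ - δ² → 1/2`. Because `|λ_{n-k}| ≥ 5^k x` and `|λ_{n-2}| ≥ x⁴`, the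
remaining factors multiply to `1 + O(x⁻⁴)`, which moves `s_n²` by only `O(x⁻²)`. -/

open Filter Topology Real

namespace Real

variable {ι : Type*} {a : ι → ℝ}

lemma tprod_one_add_eq_exp_tsum_log (h0 : ∀ i, 0 ≤ a i) (hs : Summable a) :
    ∏' i, (1 + a i) = exp (∑' i, log (1 + a i)) :=
  (rexp_tsum_eq_tprod (fun i => by linarith [h0 i]) (summable_log_one_add_of_summable hs)).symm

lemma one_le_tprod_one_add (h0 : ∀ i, 0 ≤ a i) (hs : Summable a) : 1 ≤ ∏' i, (1 + a i) := by
  rw [tprod_one_add_eq_exp_tsum_log h0 hs]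
  exact one_le_exp (tsum_nonneg fun i => log_nonneg (by linarith [h0 i]))

lemma tprod_one_add_le_exp_tsum (h0 : ∀ i, 0 ≤ a i) (hs : Summable a) :
    ∏' i, (1 + a i) ≤ exp (∑' i, a i) := by
  rw [tprod_one_add_eq_exp_tsum_log h0 hs]
  refine exp_le_exp.2 <| (summable_log_one_add_of_summable hs).tsum_le_tsum (fun i => ?_) hs
  linarith [log_le_sub_one_of_pos (show 0 < 1 + a i by linarith [h0 i])]

end Real

/-- `2cδ - δ²` for `c = 1 + 1/(4t)` and `δ = t(1+2t)/(1+5t+2t²)`, written so that it is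
continuous at `t = 0`. -/
noncomputable def truncDiff (t : ℝ) : ℝ :=
  (1 + 4 * t) * (1 + 2 * t) / (2 * (1 + 5 * t + 2 * t ^ 2)) -
    (t * (1 + 2 * t) / (1 + 5 * t + 2 * t ^ 2)) ^ 2

lemma tendsto_truncDiff : Tendsto truncDiff (𝓝 0) (𝓝 (1 / 2)) := by
  have h : ContinuousAt truncDiff 0 := by
    unfold truncDiff
    exact .sub (.div (by fun_prop) (by fun_prop) (by norm_num))
      (.pow (.div (by fun_prop) (by fun_prop) (by norm_num)) 2)
  simpa [truncDiff] using h.tendsto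

lemma sq_sub_sq_two_factors {l : ℝ} (hl : l < 0) :
    (1 - l / 4) ^ 2 - (-l / 4 * ((1 + 4 / (2 - l)) * (1 + 4 / (2 - l * (5 - l))))) ^ 2 =
      truncDiff (-l)⁻¹ := by
  obtain ⟨x, hx, rfl⟩ : ∃ x, 0 < x ∧ l = -x := ⟨-l, by linarith, by ring⟩
  have h1 : 2 + x ≠ 0 := by positivity
  have h2 : 2 + x * (5 + x) ≠ 0 := by positivity
  have h3 : x ^ 2 + 5 * x + 2 ≠ 0 := by positivity
  simp only [truncDiff, neg_neg, sub_neg_eq_add, neg_mul, neg_div]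
  field_simp
  ring

lemma two_factors_nonneg {l : ℝ} (hl : l < 0) :
    0 ≤ -l / 4 * ((1 + 4 / (2 - l)) * (1 + 4 / (2 - l * (5 - l)))) := by
  have h1 : 0 < 2 - l := by linarith
  have h2 : 0 < 2 - l * (5 - l) := by nlinarith
  have : 0 < -l := by linarith
  positivity

lemma two_factors_le {l : ℝ} (hl : l < 0) :
    -l / 4 * ((1 + 4 / (2 - l)) * (1 + 4 / (2 - l * (5 - l)))) ≤ 1 - l / 4 := by
  obtain ⟨x, hx, rfl⟩ : ∃ x, 0 < x ∧ l = -x := ⟨-l, by linarith, by ring⟩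
  have h1 : 0 < 2 + x := by positivity
  have h2 : 0 < 2 + x * (5 + x) := by positivity
  simp only [neg_neg, sub_neg_eq_add, neg_mul, neg_div]
  have hδ : 1 + x / 4 - x / 4 * ((1 + 4 / (2 + x)) * (1 + 4 / (2 + x * (5 + x)))) =
      (x + 2) / (x ^ 2 + 5 * x + 2) := by
    field_simp
    ring
  rw [← sub_nonneg, hδ]
  positivity

/-- `λ ↦ λ (5 - λ)` is the spectral decimation map of the Sierpinski gasket. -/
structure IsSpectralDecimation (L : ℤ → ℝ) : Prop where
  neg : ∀ n, L n < 0
  pred_eq : ∀ n, L (n - 1) = L n * (5 - L n)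

namespace IsSpectralDecimation

variable {L : ℤ → ℝ}

lemma pow_mul_le (hL : IsSpectralDecimation L) (n : ℤ) (k : ℕ) :
    5 ^ k * -L n ≤ -L (n - k) := by
  induction k with
  | zero => simp
  | succ k ih =>
    have hstep : L (n - (k + 1 : ℕ)) = L (n - k) * (5 - L (n - k)) := by
      rw [← hL.pred_eq]; congr 1; push_cast; ring
    rw [hstep, pow_succ]
    nlinarith [hL.neg (n - k), sq_nonneg (L (n - k))]

lemma sq_le (hL : IsSpectralDecimation L) (n : ℤ) : L n ^ 2 ≤ -L (n - 1) := by
  rw [hL.pred_eq]; nlinarith [hL.neg n]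

lemma four_div_nonneg (hL : IsSpectralDecimation L) (n : ℤ) (k : ℕ) :
    0 ≤ 4 / (2 - L (n - k)) :=
  div_nonneg zero_le_four (by linarith [hL.neg (n - k)])

lemma four_div_le_geometric (hL : IsSpectralDecimation L) (n : ℤ) (k : ℕ) :
    4 / (2 - L (n - k)) ≤ 4 / -L n * (1 / 5) ^ k := by
  have hpos : 0 < 5 ^ k * -L n := mul_pos (by positivity) (neg_pos.2 (hL.neg n))
  calc 4 / (2 - L (n - k)) ≤ 4 / (5 ^ k * -L n) :=
        div_le_div_of_nonneg_left zero_le_four hpos (by linarith [hL.pow_mul_le n k])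
    _ = 4 / -L n * (1 / 5) ^ k := by
        rw [div_pow, one_pow]; field_simp

lemma summable_four_div (hL : IsSpectralDecimation L) (n : ℤ) :
    Summable fun k : ℕ => 4 / (2 - L (n - k)) :=
  .of_nonneg_of_le (hL.four_div_nonneg n) (hL.four_div_le_geometric n)
    ((summable_geometric_of_lt_one (by norm_num) (by norm_num)).mul_left _)

lemma one_le_tprod (hL : IsSpectralDecimation L) (n : ℤ) :
    1 ≤ ∏' k : ℕ, (1 + 4 / (2 - L (n - k))) :=
  one_le_tprod_one_add (hL.four_div_nonneg n) (hL.summable_four_div n)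

lemma tsum_four_div_le (hL : IsSpectralDecimation L) (n : ℤ) :
    ∑' k : ℕ, 4 / (2 - L (n - k)) ≤ 5 / -L n := by
  calc ∑' k : ℕ, 4 / (2 - L (n - k)) ≤ ∑' k : ℕ, 4 / -L n * (1 / 5 : ℝ) ^ k :=
        (hL.summable_four_div n).tsum_le_tsum (hL.four_div_le_geometric n)
          ((summable_geometric_of_lt_one (by norm_num) (by norm_num)).mul_left _)
    _ = 5 / -L n := by
        rw [tsum_mul_left, tsum_geometric_of_lt_one (by norm_num) (by norm_num)]
        norm_num [div_mul_eq_mul_div]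

lemma tprod_eq_mul_mul_tprod (hL : IsSpectralDecimation L) (n : ℤ) :
    ∏' k : ℕ, (1 + 4 / (2 - L (n - k))) =
      (1 + 4 / (2 - L n)) * (1 + 4 / (2 - L (n - 1))) *
        ∏' k : ℕ, (1 + 4 / (2 - L (n - 2 - k))) := by
  have hshift (k : ℕ) : n - ((k + 2 : ℕ) : ℤ) = n - 2 - k := by push_cast; ring
  have htail : Multipliable fun k : ℕ => 1 + 4 / (2 - L (n - ((k + 2 : ℕ) : ℤ))) := by
    simpa only [hshift] using Real.multipliable_one_add_of_summable (hL.summable_four_div (n - 2))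
  rw [← htail.prod_mul_tprod_nat_mul' (f := fun k : ℕ => 1 + 4 / (2 - L (n - k)))]
  simp only [Finset.prod_range_succ, Finset.prod_range_zero, one_mul, hshift]
  norm_num

lemma tprod_le_exp (hL : IsSpectralDecimation L) (n : ℤ) :
    ∏' k : ℕ, (1 + 4 / (2 - L (n - 2 - k))) ≤ exp (5 / L n ^ 4) := by
  have hn2 : L n ^ 4 ≤ -L (n - 2) := by
    have h1 := hL.sq_le n
    have h2 := hL.sq_le (n - 1)
    rw [show n - 1 - 1 = n - 2 by ring] at h2
    nlinarith [hL.neg n]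
  calc ∏' k : ℕ, (1 + 4 / (2 - L (n - 2 - k)))
      ≤ exp (∑' k : ℕ, 4 / (2 - L (n - 2 - k))) :=
        tprod_one_add_le_exp_tsum (hL.four_div_nonneg _) (hL.summable_four_div _)
    _ ≤ exp (5 / L n ^ 4) := by
        refine exp_le_exp.2 ((hL.tsum_four_div_le _).trans ?_)
        exact div_le_div_of_nonneg_left (by norm_num) (Even.pow_pos (by decide) (hL.neg n).ne) hn2

lemma sq_tprod_le (hL : IsSpectralDecimation L) {n : ℤ} (hn : L n ≤ -2) :
    (∏' k : ℕ, (1 + 4 / (2 - L (n - 2 - k)))) ^ 2 ≤ 1 + 2 * (10 / L n ^ 4) := by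
  have hl4 : 0 < L n ^ 4 := Even.pow_pos (by decide) (hL.neg n).ne
  have hsmall : |10 / L n ^ 4| ≤ 1 := by
    have : 4 ≤ L n ^ 2 := by nlinarith
    rw [abs_of_pos (by positivity), div_le_one hl4]; nlinarith
  calc (∏' k : ℕ, (1 + 4 / (2 - L (n - 2 - k)))) ^ 2 ≤ exp (5 / L n ^ 4) ^ 2 :=
        pow_le_pow_left₀ (zero_le_one.trans (hL.one_le_tprod _)) (hL.tprod_le_exp n) 2
    _ = exp (10 / L n ^ 4) := by rw [← exp_nat_mul]; ring_nf
    _ ≤ 1 + 2 * (10 / L n ^ 4) := by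
        have := (abs_le.1 (abs_exp_sub_one_le hsmall)).2
        rw [abs_of_pos (by positivity)] at this
        linarith

lemma sq_sub_sq_mem_Icc (hL : IsSpectralDecimation L) {n : ℤ} (hn : L n ≤ -2) :
    (1 - L n / 4) ^ 2 - ((-(L n) / 4) * ∏' k : ℕ, (1 + 4 / (2 - L (n - k)))) ^ 2 ∈
      Set.Icc (truncDiff (-L n)⁻¹ - 20 * ((-L n)⁻¹) ^ 2) (truncDiff (-L n)⁻¹) := by
  have hl := hL.neg n
  have hR1 := hL.one_le_tprod (n - 2)
  have hR2 := hL.sq_tprod_le hn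
  rw [hL.tprod_eq_mul_mul_tprod, hL.pred_eq, ← sq_sub_sq_two_factors hl]
  set a := -L n / 4 * ((1 + 4 / (2 - L n)) * (1 + 4 / (2 - L n * (5 - L n))))
  set R := ∏' k : ℕ, (1 + 4 / (2 - L (n - 2 - k)))
  have ha0 : 0 ≤ a := two_factors_nonneg hl
  have hal : a ≤ -L n := (two_factors_le hl).trans (by linarith)
  have hprod : (-L n / 4 * ((1 + 4 / (2 - L n)) * (1 + 4 / (2 - L n * (5 - L n))) * R)) ^ 2 =
      a ^ 2 * R ^ 2 := by ring
  have herr : a ^ 2 * (2 * (10 / L n ^ 4)) ≤ 20 * ((-L n)⁻¹) ^ 2 :=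
    calc a ^ 2 * (2 * (10 / L n ^ 4)) ≤ (-L n) ^ 2 * (2 * (10 / L n ^ 4)) :=
          mul_le_mul_of_nonneg_right (pow_le_pow_left₀ ha0 hal 2) (by positivity)
      _ = 20 * ((-L n)⁻¹) ^ 2 := by field_simp; ring
  have hupper : a ^ 2 ≤ a ^ 2 * R ^ 2 := le_mul_of_one_le_right (sq_nonneg a) (one_le_pow₀ hR1)
  have hlower : a ^ 2 * R ^ 2 ≤ a ^ 2 * (1 + 2 * (10 / L n ^ 4)) :=
    mul_le_mul_of_nonneg_left hR2 (sq_nonneg a)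
  rw [hprod]
  constructor <;> linarith

end IsSpectralDecimation

theorem c_sq_sub_s_sq_tendsto_half (L : ℤ → ℝ) (hLneg : ∀ n, L n < 0)
    (hLrec : ∀ n, L (n - 1) = L n * (5 - L n))
    (hLbot : Filter.Tendsto L Filter.atBot Filter.atBot) :
    Filter.Tendsto
      (fun n : ℤ =>
        (1 - L n / 4) ^ 2 -
          ((-(L n) / 4) * ∏' k : ℕ, (1 + 4 / (2 - L (n - k)))) ^ 2)
      Filter.atBot (nhds (1/2)) := by
  have hL : IsSpectralDecimation L := ⟨hLneg, hLrec⟩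
  have ht : Tendsto (fun n => (-L n)⁻¹) atBot (𝓝 0) :=
    tendsto_inv_atTop_zero.comp (tendsto_neg_atBot_atTop.comp hLbot)
  have hupper := tendsto_truncDiff.comp ht
  have hlower :
      Tendsto (fun n => truncDiff (-L n)⁻¹ - 20 * ((-L n)⁻¹) ^ 2) atBot (𝓝 (1 / 2)) := by
    simpa using hupper.sub ((ht.pow 2).const_mul 20)
  have hbounds := (hLbot.eventually_le_atBot (-2)).mono fun n hn => hL.sq_sub_sq_mem_Icc hn
  exact tendsto_of_tendsto_of_tendsto_of_le_of_le' hlower hupper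
    (hbounds.mono fun n h => h.1) (hbounds.mono fun n h => h.2)
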